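/- arXiv:2411.03092 — 2 statements merged into one kernel-verified Lean document; each statement's English description precedes it below -/
import Mathlib

section
/- The set of real roots is stable under translation by δ: for every α ∈ Δ̃_re and every n ∈ ℤ, α + nδ ∈ Δ̃_re, where Δ̃_re = {w(α_v) : w ∈ W̃_A, v ∈ Ṽ_A}. -/
/-!
Every element of `W̃_A` fixes `δ`, because `δ` lies in the radical of `Ĩ`; hence the set of `x`
whose whole string `x + ℤδ` consists of real roots is `W̃_A`-stable, and it suffices to show that
it contains every simple root. Since `Ĩ(α_𝟙, α_{𝟙*}) = 2`, the product `r_{α_𝟙} r_{α_{𝟙*}}` moves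
`α_𝟙` by `-2δ`, and together with `α_{𝟙*} = α_𝟙 + δ` this gives the string through
`α_𝟙`. Finally, `r_{α_u} r_{α_v} α_u = α_v` whenever `Ĩ(α_u, α_v) = -1`, and every branch vertex
is joined to `𝟙` by such a path.
-/

namespace AffineGRS

noncomputable section

/-- The vertex set `Ṽ_A` of the affine Coxeter--Dynkin diagram attached to a
triple `A = (a 0, a 1, a 2)`: it consists of `𝟙*`, `𝟙` and the branch vertices
`(i, j)` for `i ∈ {1,2,3}` and `1 ≤ j ≤ a i − 1` (coded by `Fin (a i - 1)`). -/
inductive Vt (a : Fin 3 → ℕ) : Type where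
  | star : Vt a
  | one  : Vt a
  | br   : (i : Fin 3) → Fin (a i - 1) → Vt a

def vtEquiv (a : Fin 3 → ℕ) : Vt a ≃ (Unit ⊕ Unit ⊕ (Σ i : Fin 3, Fin (a i - 1))) where
  toFun v :=
    match v with
    | Vt.star => Sum.inl ()
    | Vt.one => Sum.inr (Sum.inl ())
    | Vt.br i j => Sum.inr (Sum.inr ⟨i, j⟩)
  invFun x :=
    match x with
    | Sum.inl _ => Vt.star
    | Sum.inr (Sum.inl _) => Vt.one
    | Sum.inr (Sum.inr ⟨i, j⟩) => Vt.br i j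
  left_inv v := by cases v <;> rfl
  right_inv x := by rcases x with _ | (_ | ⟨i, j⟩) <;> rfl

instance (a : Fin 3 → ℕ) : DecidableEq (Vt a) := (vtEquiv a).decidableEq
instance (a : Fin 3 → ℕ) : Fintype (Vt a) := Fintype.ofEquiv _ (vtEquiv a).symm

/-- The entries `Ĩ(α_u, α_v)` of the Cartan form on the basis `{α_v : v ∈ Ṽ_A}`. -/
def cartan (a : Fin 3 → ℕ) : Vt a → Vt a → ℤ
  | Vt.star, Vt.star => 2
  | Vt.one, Vt.one => 2
  | Vt.star, Vt.one => 2
  | Vt.one, Vt.star => 2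
  | Vt.star, Vt.br _ j => if (j : ℕ) = 0 then -1 else 0
  | Vt.br _ j, Vt.star => if (j : ℕ) = 0 then -1 else 0
  | Vt.one, Vt.br _ j => if (j : ℕ) = 0 then -1 else 0
  | Vt.br _ j, Vt.one => if (j : ℕ) = 0 then -1 else 0
  | Vt.br i j, Vt.br i' j' =>
      if i = i' ∧ ((j : ℕ) = (j' : ℕ) + 1 ∨ (j' : ℕ) = (j : ℕ) + 1) then -1
      else if i = i' ∧ (j : ℕ) = (j' : ℕ) then 2 else 0

/-- The root lattice `L̃`: the free `ℤ`-module with basis `{α_v : v ∈ Ṽ_A}`. -/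
abbrev Lt (a : Fin 3 → ℕ) : Type := Vt a →₀ ℤ

/-- The basis vector `α_v ∈ L̃`. -/
def gen (a : Fin 3 → ℕ) (v : Vt a) : Lt a := Finsupp.single v 1

/-- The symmetric bilinear form `Ĩ` on `L̃`. -/
def Iform (a : Fin 3 → ℕ) (x y : Lt a) : ℤ :=
  x.sum fun u xu => y.sum fun v yv => xu * yv * cartan a u v

/-- `δ := α_{𝟙*} − α_𝟙`. -/
def delta (a : Fin 3 → ℕ) : Lt a := gen a Vt.star - gen a Vt.one

/-- The reflection `r_α(x) = x − Ĩ(α, x) α` (for `α` with `Ĩ(α,α) = 2`). -/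
def reflect (a : Fin 3 → ℕ) (α : Lt a) (x : Lt a) : Lt a := x - Iform a α x • α

/-- The composite `r_{α_{(i,1)}} ∘ r_{α_{(i,2)}} ∘ ⋯ ∘ r_{α_{(i, a i − 1)}}`. -/
def branchComp (a : Fin 3 → ℕ) (i : Fin 3) : Lt a → Lt a :=
  (List.finRange (a i - 1)).foldr (fun j f => reflect a (gen a (Vt.br i j)) ∘ f) id

/-- The Coxeter transformation
`c̃_A := r_{α_{𝟙*}} ∘ r_{α_𝟙} ∘ r_{α_{(1,1)}} ∘ ⋯ ∘ r_{α_{(3, a₃ − 1)}}`. -/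
def coxeter (a : Fin 3 → ℕ) : Lt a → Lt a :=
  reflect a (gen a Vt.star) ∘ reflect a (gen a Vt.one) ∘
    branchComp a 0 ∘ branchComp a 1 ∘ branchComp a 2

/-- A `ℤ`-bilinear form `χ` on `L̃` is an Euler form for `(L̃, Ĩ, c̃_A)` if
`Ĩ = χ + χᵀ` and `χ(λ, λ') = −χ(λ', c̃_A(λ))` (Serre duality). -/
def IsEulerForm (a : Fin 3 → ℕ) (χ : Lt a →ₗ[ℤ] Lt a →ₗ[ℤ] ℤ) : Prop :=
  (∀ x y : Lt a, Iform a x y = χ x y + χ y x) ∧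
  (∀ x y : Lt a, χ x y = - χ y (coxeter a x))

/-- The twist automorphism `t_δ(λ) = λ − χ(δ, λ) δ` (as a function). -/
def twist (a : Fin 3 → ℕ) (χ : Lt a →ₗ[ℤ] Lt a →ₗ[ℤ] ℤ) (x : Lt a) : Lt a :=
  x - χ (delta a) x • delta a

/-- The inverse of the twist automorphism, `λ ↦ λ + χ(δ, λ) δ`. -/
def twistInv (a : Fin 3 → ℕ) (χ : Lt a →ₗ[ℤ] Lt a →ₗ[ℤ] ℤ) (x : Lt a) : Lt a :=
  x + χ (delta a) x • delta a

/-- The simple reflections `r_{α_v}`, viewed as the set of `ℤ`-linear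
automorphisms of `L̃` whose underlying function is `reflect a (gen a v)`. -/
def weylGens (a : Fin 3 → ℕ) : Set (Lt a ≃ₗ[ℤ] Lt a) :=
  { g | ∃ v : Vt a, ∀ x : Lt a, g x = reflect a (gen a v) x }

/-- The affine Weyl group `W̃_A`, generated by the simple reflections. -/
def weyl (a : Fin 3 → ℕ) : Subgroup (Lt a ≃ₗ[ℤ] Lt a) := Subgroup.closure (weylGens a)

/-- The set of real roots `Δ̃_re = {w(α_v) : w ∈ W̃_A, v ∈ Ṽ_A}`. -/
def realRoots (a : Fin 3 → ℕ) : Set (Lt a) :=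
  { x | ∃ w ∈ weyl a, ∃ v : Vt a, x = w (gen a v) }

/-- The extended affine Weyl group `W̃_A^ext`, generated by `W̃_A` and `t_δ`. -/
def extWeyl (a : Fin 3 → ℕ) (χ : Lt a →ₗ[ℤ] Lt a →ₗ[ℤ] ℤ) :
    Subgroup (Lt a ≃ₗ[ℤ] Lt a) :=
  Subgroup.closure (weylGens a ∪ { g | ∀ x : Lt a, g x = twist a χ x })

theorem _root_.Module.reflection_reflection_apply_of_eq_neg_one {R M : Type*} [CommRing R]
    [AddCommGroup M] [Module R M] {x y : M} {f g : Module.Dual R M} (hf : f x = 2)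
    (hg : g y = 2) (hfy : f y = -1) (hgx : g x = -1) :
    Module.reflection hf (Module.reflection hg x) = y := by
  simp only [Module.reflection_apply, map_sub, map_smul, hf, hfy, hgx]
  module

section

variable (a : Fin 3 → ℕ)

lemma cartan_self (v : Vt a) : cartan a v v = 2 := by
  cases v <;> simp [cartan]

def coroot (v : Vt a) : Module.Dual ℤ (Lt a) := Finsupp.linearCombination ℤ (cartan a v)

lemma coroot_gen (v u : Vt a) : coroot a v (gen a u) = cartan a v u := by
  simp [coroot, gen]

lemma Iform_gen_left (v : Vt a) (x : Lt a) : Iform a (gen a v) x = coroot a v x := by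
  simp [Iform, gen, coroot, Finsupp.linearCombination_apply, mul_comm]

lemma coroot_delta (v : Vt a) : coroot a v (delta a) = 0 := by
  cases v <;> simp [delta, coroot_gen, cartan]

lemma coroot_gen_self (v : Vt a) : coroot a v (gen a v) = 2 := by
  rw [coroot_gen, cartan_self]

def sRefl (v : Vt a) : Lt a ≃ₗ[ℤ] Lt a := Module.reflection (coroot_gen_self a v)

lemma sRefl_mem_weyl (v : Vt a) : sRefl a v ∈ weyl a :=
  Subgroup.subset_closure ⟨v, fun x => by
    rw [sRefl, Module.reflection_apply, reflect, Iform_gen_left]⟩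

lemma weyl_apply_delta {w : Lt a ≃ₗ[ℤ] Lt a} (hw : w ∈ weyl a) : w (delta a) = delta a := by
  induction hw using Subgroup.closure_induction with
  | mem g hg =>
    obtain ⟨v, hv⟩ := hg
    rw [hv, reflect, Iform_gen_left, coroot_delta, zero_smul, sub_zero]
  | one => rfl
  | mul g h _ _ hg hh => rw [LinearEquiv.mul_apply, hh, hg]
  | inv g _ hg => exact (LinearEquiv.symm_apply_eq g).2 hg.symm

lemma gen_mem_realRoots (v : Vt a) : gen a v ∈ realRoots a := ⟨1, one_mem _, v, rfl⟩

lemma weyl_apply_mem_realRoots {w : Lt a ≃ₗ[ℤ] Lt a} (hw : w ∈ weyl a) {x : Lt a}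
    (hx : x ∈ realRoots a) : w x ∈ realRoots a := by
  obtain ⟨u, hu, v, rfl⟩ := hx
  exact ⟨w * u, mul_mem hw hu, v, rfl⟩

def deltaStable : Set (Lt a) := {x | ∀ n : ℤ, x + n • delta a ∈ realRoots a}

lemma weyl_apply_mem_deltaStable {w : Lt a ≃ₗ[ℤ] Lt a} (hw : w ∈ weyl a) {x : Lt a}
    (hx : x ∈ deltaStable a) : w x ∈ deltaStable a := fun n => by
  simpa [weyl_apply_delta a hw] using weyl_apply_mem_realRoots a hw (hx n)

lemma sRefl_mul_sRefl_zpow_apply {u v : Vt a} (huv : cartan a u v = 2) (hvu : cartan a v u = 2)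
    (m : ℤ) : ((sRefl a u * sRefl a v) ^ m) (gen a u) =
      (2 * m + 1) • gen a u - (2 * m) • gen a v := by
  have h := Module.reflection_mul_reflection_zpow_apply_self (coroot_gen_self a u)
    (coroot_gen_self a v) m 2 (by rw [coroot_gen, coroot_gen, huv, hvu]; norm_num)
  simp only [Polynomial.Chebyshev.S_eval_two, Int.cast_id, coroot_gen a v u, hvu] at h
  rw [sRefl, sRefl, h]
  module

lemma gen_one_mem_deltaStable : gen a Vt.one ∈ deltaStable a := by
  have string {u v : Vt a} (huv : cartan a u v = 2) (hvu : cartan a v u = 2) (m : ℤ) :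
      (2 * m + 1) • gen a u - (2 * m) • gen a v ∈ realRoots a := by
    rw [← sRefl_mul_sRefl_zpow_apply a huv hvu]
    exact weyl_apply_mem_realRoots a
      (zpow_mem (mul_mem (sRefl_mem_weyl a u) (sRefl_mem_weyl a v)) m) (gen_mem_realRoots a u)
  intro n
  obtain ⟨k, rfl | rfl⟩ := Int.even_or_odd' n
  -- `(r_𝟙 r_{𝟙*})^(-k) α_𝟙 = α_𝟙 + 2kδ` and `(r_{𝟙*} r_𝟙)^k α_{𝟙*} = α_𝟙 + (2k+1)δ`
  · convert string (u := Vt.one) (v := Vt.star) rfl rfl (-k) using 1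
    rw [delta]
    module
  · convert string (u := Vt.star) (v := Vt.one) rfl rfl k using 1
    rw [delta]
    module

lemma gen_mem_deltaStable_of_cartan_eq_neg_one {u v : Vt a} (huv : cartan a u v = -1)
    (hvu : cartan a v u = -1) (hu : gen a u ∈ deltaStable a) : gen a v ∈ deltaStable a := by
  rw [← Module.reflection_reflection_apply_of_eq_neg_one (coroot_gen_self a u)
    (coroot_gen_self a v) (by rwa [coroot_gen]) (by rwa [coroot_gen])]
  exact weyl_apply_mem_deltaStable a (sRefl_mem_weyl a u)
    (weyl_apply_mem_deltaStable a (sRefl_mem_weyl a v) hu)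

lemma gen_mem_deltaStable (v : Vt a) : gen a v ∈ deltaStable a := by
  cases v with
  | star =>
    intro n
    convert gen_one_mem_deltaStable a (n + 1) using 1
    rw [delta]
    module
  | one => exact gen_one_mem_deltaStable a
  | br i j =>
    obtain ⟨j, hj⟩ := j
    induction j with
    | zero =>
      exact gen_mem_deltaStable_of_cartan_eq_neg_one a (u := Vt.one) (by simp [cartan])
        (by simp [cartan]) (gen_one_mem_deltaStable a)
    | succ j ih =>
      exact gen_mem_deltaStable_of_cartan_eq_neg_one a (u := Vt.br i ⟨j, by omega⟩)
        (by simp [cartan]) (by simp [cartan]) (ih (by omega))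

lemma realRoots_subset_deltaStable : realRoots a ⊆ deltaStable a := by
  rintro _ ⟨w, hw, v, rfl⟩
  exact weyl_apply_mem_deltaStable a hw (gen_mem_deltaStable a v)

end

theorem realRoots_add_delta_general (a : Fin 3 → ℕ) :
    ∀ α ∈ realRoots a, ∀ n : ℤ, α + n • delta a ∈ realRoots a :=
  fun _ hα => realRoots_subset_deltaStable a hα

/-- **Real roots are stable under translation by `δ`** (equation (3.2) of the
paper): for every `α ∈ Δ̃_re` and every `n ∈ ℤ`, `α + nδ ∈ Δ̃_re`, where
`Δ̃_re = {w(α_v) : w ∈ W̃_A, v ∈ Ṽ_A}`. -/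
theorem realRoots_add_delta (a : Fin 3 → ℕ) (ha : ∀ i, 0 < a i)
    (hA : 1 < (a 0 : ℚ)⁻¹ + (a 1 : ℚ)⁻¹ + (a 2 : ℚ)⁻¹) :
    ∀ α ∈ realRoots a, ∀ n : ℤ, α + n • delta a ∈ realRoots a :=
  realRoots_add_delta_general a

end
end AffineGRS
end

section
/- Let ℓ_A = lcm(a₁,a₂,a₃) and k = ℓ_A/a₁ + ℓ_A/a₂ + ℓ_A/a₃ − ℓ_A (a positive integer, equal to χ_A·ℓ_A where χ_A = 1/a₁+1/a₂+1/a₃−1). Then c̃_A^{ℓ_A} = t_δ^{−k} as automorphisms of L̃. -/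
namespace AffineGRS

noncomputable section

/-!
The Coxeter transformation `c̃` fixes `δ`. On arm `i` the reflections act as the Coxeter element of
a chain of type `A`, and `c̃` permutes cyclically, with period `aᵢ`, the vectors
`α_{(i,1)} ↦ α_{(i,2)} ↦ ⋯ ↦ α_{(i,aᵢ-1)} ↦ δ - ∑ⱼ α_{(i,j)} ↦ α_{(i,1)}`, whose sum is `δ`
(for `aᵢ = 1` the orbit is just `δ`). Since `c̃ α_{𝟙*} = α_{𝟙*} - δ + ∑ᵢ (start of orbit i)`,
this gives `c̃^ℓ α_{𝟙*} = α_{𝟙*} + (∑ᵢ ℓ/aᵢ - ℓ) δ`, hence `c̃^ℓ λ = λ + k (λ_{𝟙*} + λ_𝟙) δ`.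

The Euler form satisfies `χ(λ, μ - c̃ μ) = Ĩ(λ, μ)` and is `c̃`-invariant. Comparing `χ(λ, μ)`
with `χ(c̃^ℓ λ, c̃^ℓ μ)` forces `χ(δ, λ) = p (λ_{𝟙*} + λ_𝟙)` with `p = χ(δ, α_{𝟙*})`. Following
`χ(α_{𝟙*}, ·)` around the orbit of arm `i` gives `aᵢ (qᵢ + 1) = 1 - p`, where `qᵢ` is its value at
the start of the orbit, while `μ = α_{𝟙*}` gives `∑ᵢ (qᵢ + 1) = 1 - p`. As `∑ᵢ 1/aᵢ ≠ 1`, `p = 1`.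
-/

open Module Finset

lemma coe_list_prod_map {ι : Type*} {R M : Type*} [Semiring R] [AddCommMonoid M] [Module R M]
    (l : List ι) (f : ι → End R M) :
    ⇑(l.map f).prod = l.foldr (fun j g => ⇑(f j) ∘ g) id := by
  induction l with
  | nil => rfl
  | cons j l ih => rw [List.map_cons, List.prod_cons, End.coe_mul, ih, List.foldr_cons]

section Chain

variable {R M : Type*} [CommRing R] [AddCommGroup M] [Module R M]
  (B : LinearMap.BilinForm R M) (β : ℕ → M)

def chainCoxeter (n : ℕ) : End R M :=
  ((List.range n).map fun t => preReflection (β t) (B (β t))).prod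

def IsTypeAChain (m : ℕ) : Prop :=
  ∀ s t, s < m → t < m →
    B (β s) (β t) = if s = t + 1 ∨ t = s + 1 then -1 else if s = t then 2 else 0

variable {B β}

lemma chainCoxeter_succ (n : ℕ) :
    chainCoxeter B β (n + 1) = chainCoxeter B β n * preReflection (β n) (B (β n)) := by
  simp [chainCoxeter, List.range_succ]

lemma chainCoxeter_apply_of_le {n m : ℕ} (hnm : n ≤ m) {y : M}
    (hy : ∀ t, n ≤ t → t < m → B (β t) y = 0) :
    chainCoxeter B β m y = chainCoxeter B β n y := by
  induction m, hnm using Nat.le_induction with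
  | base => rfl
  | succ m hnm ih =>
    rw [chainCoxeter_succ, End.mul_apply, preReflection_apply, hy m hnm m.lt_succ_self,
      zero_smul, sub_zero]
    exact ih fun t ht htm => hy t ht (htm.trans m.lt_succ_self)

lemma chainCoxeter_apply_eq_self {m : ℕ} {y : M} (hy : ∀ t < m, B (β t) y = 0) :
    chainCoxeter B β m y = y :=
  chainCoxeter_apply_of_le (Nat.zero_le m) fun t _ => hy t

lemma chainCoxeter_apply_of_pos {m : ℕ} (hm : 0 < m) {y : M}
    (hy : ∀ t, 0 < t → t < m → B (β t) y = 0) :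
    chainCoxeter B β m y = y - B (β 0) y • β 0 := by
  rw [chainCoxeter_apply_of_le hm hy, chainCoxeter_succ, End.mul_apply, preReflection_apply]
  rfl

namespace IsTypeAChain

variable {m : ℕ} (hβ : IsTypeAChain B β m)
include hβ

lemma apply_self {t : ℕ} (ht : t < m) : B (β t) (β t) = 2 := by
  simp [hβ t t ht ht]

lemma apply_succ {t : ℕ} (ht : t + 1 < m) : B (β t) (β (t + 1)) = -1 := by
  simp [hβ t (t + 1) (by omega) ht]

lemma apply_succ' {t : ℕ} (ht : t + 1 < m) : B (β (t + 1)) (β t) = -1 := by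
  simp [hβ (t + 1) t ht (by omega)]

lemma apply_of_lt {s t : ℕ} (hst : s + 1 < t) (ht : t < m) : B (β s) (β t) = 0 := by
  rw [hβ s t (by omega) ht, if_neg (by omega), if_neg (by omega)]

lemma apply_of_gt {s t : ℕ} (hst : t + 1 < s) (hs : s < m) : B (β s) (β t) = 0 := by
  rw [hβ s t hs (by omega), if_neg (by omega), if_neg (by omega)]

lemma chainCoxeter_apply_self {n : ℕ} (hn : n < m) :
    chainCoxeter B β n (β n) = ∑ t ∈ range (n + 1), β t := by
  induction n with
  | zero => simp [chainCoxeter]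
  | succ n ih =>
    have hfix : chainCoxeter B β n (β (n + 1)) = β (n + 1) :=
      chainCoxeter_apply_eq_self fun t ht => hβ.apply_of_lt (by omega) hn
    rw [chainCoxeter_succ, End.mul_apply, preReflection_apply, hβ.apply_succ hn, map_sub,
      map_smul, hfix, ih (by omega), sum_range_succ _ (n + 1)]
    module

lemma chainCoxeter_succ_apply {t : ℕ} (ht : t < m) :
    chainCoxeter B β (t + 1) (β t) = -∑ s ∈ range (t + 1), β s := by
  rw [chainCoxeter_succ, End.mul_apply, preReflection_apply_self (hβ.apply_self ht), map_neg,
    hβ.chainCoxeter_apply_self ht]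

lemma chainCoxeter_apply_of_succ_lt {t : ℕ} (ht : t + 1 < m) :
    chainCoxeter B β m (β t) = β (t + 1) := by
  rw [chainCoxeter_apply_of_le (n := t + 2) (by omega)
      fun s hs hsm => hβ.apply_of_gt (by omega) hsm,
    chainCoxeter_succ, End.mul_apply, preReflection_apply, hβ.apply_succ' ht, map_sub, map_smul,
    hβ.chainCoxeter_succ_apply (by omega), hβ.chainCoxeter_apply_self ht,
    sum_range_succ _ (t + 1)]
  module

lemma chainCoxeter_apply_last (hm : 0 < m) :
    chainCoxeter B β m (β (m - 1)) = -∑ t ∈ range m, β t := by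
  obtain ⟨n, rfl⟩ : ∃ n, m = n + 1 := ⟨m - 1, by omega⟩
  exact hβ.chainCoxeter_succ_apply n.lt_succ_self

end IsTypeAChain

end Chain

section Cartan

variable (a : Fin 3 → ℕ)

def cartanForm : LinearMap.BilinForm ℤ (Lt a) :=
  Matrix.toBilin Finsupp.basisSingleOne (Matrix.of (cartan a))

lemma cartanForm_apply (x y : Lt a) : cartanForm a x y = Iform a x y := by
  rw [Iform, Finsupp.sum_fintype _ _ fun _ => by simp, cartanForm, Matrix.toBilin_apply]
  refine sum_congr rfl fun u _ => ?_
  rw [Finsupp.sum_fintype _ _ fun _ => by simp]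
  simp [mul_right_comm]

lemma cartan_comm (u v : Vt a) : cartan a u v = cartan a v u := by
  cases u <;> cases v <;> simp only [cartan]
  split_ifs <;> grind

lemma cartanForm_comm (x y : Lt a) : cartanForm a x y = cartanForm a y x := by
  simp only [cartanForm, Matrix.toBilin_apply, Matrix.of_apply]
  rw [sum_comm]
  simp [cartan_comm a, mul_comm, mul_left_comm]

variable {a}

lemma cartanForm_gen_gen (v w : Vt a) : cartanForm a (gen a v) (gen a w) = cartan a v w := by
  simp [cartanForm, gen, Finsupp.single_apply]

lemma cartanForm_delta (x : Lt a) : cartanForm a x (delta a) = 0 := by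
  have hstar_one (u : Vt a) : cartan a u .star = cartan a u .one := by cases u <;> rfl
  simp [cartanForm, delta, gen, Finsupp.single_apply, mul_sub, hstar_one]

lemma cartanForm_delta_left (x : Lt a) : cartanForm a (delta a) x = 0 := by
  rw [cartanForm_comm, cartanForm_delta]

lemma gen_one_eq : gen a .one = gen a .star - delta a := by
  rw [delta]; abel

lemma cartanForm_one (y : Lt a) : cartanForm a (gen a .one) y = cartanForm a (gen a .star) y := by
  rw [gen_one_eq, map_sub, LinearMap.sub_apply, cartanForm_delta_left, sub_zero]

end Cartan

section Coxeter

variable (a : Fin 3 → ℕ)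

/-- `armRoot a i t = α_{(i, t + 1)}`, extended by `0` for `t ≥ a i - 1`. -/
def armRoot (i : Fin 3) (t : ℕ) : Lt a :=
  if h : t < a i - 1 then gen a (.br i ⟨t, h⟩) else 0

def armSum (i : Fin 3) : Lt a := ∑ t ∈ range (a i - 1), armRoot a i t

def simpleReflection (v : Vt a) : End ℤ (Lt a) :=
  preReflection (gen a v) (cartanForm a (gen a v))

def armCoxeter (i : Fin 3) : End ℤ (Lt a) :=
  chainCoxeter (cartanForm a) (armRoot a i) (a i - 1)

def coxeterLin : End ℤ (Lt a) :=
  simpleReflection a .star * simpleReflection a .one *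
    armCoxeter a 0 * armCoxeter a 1 * armCoxeter a 2

lemma reflect_eq (α : Lt a) : reflect a α = ⇑(preReflection α (cartanForm a α)) := by
  ext1 x
  rw [reflect, preReflection_apply, cartanForm_apply]

lemma branchComp_eq (i : Fin 3) : branchComp a i = armCoxeter a i := by
  rw [armCoxeter, chainCoxeter, coe_list_prod_map, ← List.map_coe_finRange_eq_range,
    List.foldr_map, branchComp]
  congr! with j
  rw [reflect_eq, armRoot, dif_pos j.isLt]

lemma coe_coxeterLin : ⇑(coxeterLin a) = coxeter a := by
  simp only [coxeterLin, coxeter, branchComp_eq, simpleReflection, reflect_eq, End.coe_mul]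
  rfl

end Coxeter

section Arms

variable {a : Fin 3 → ℕ}

lemma isTypeAChain_armRoot (i : Fin 3) : IsTypeAChain (cartanForm a) (armRoot a i) (a i - 1) := by
  intro s t hs ht
  simp [armRoot, hs, ht, cartanForm_gen_gen, cartan]

lemma cartanForm_armRoot_of_ne {i j : Fin 3} (h : i ≠ j) (s t : ℕ) :
    cartanForm a (armRoot a i s) (armRoot a j t) = 0 := by
  unfold armRoot
  split_ifs <;> simp [cartanForm_gen_gen, cartan, h]

lemma cartanForm_star_armRoot_zero {i : Fin 3} (h : 0 < a i - 1) :
    cartanForm a (gen a .star) (armRoot a i 0) = -1 := by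
  simp [armRoot, h, cartanForm_gen_gen, cartan]

lemma cartanForm_star_armRoot_of_pos {i : Fin 3} {t : ℕ} (ht : 0 < t) :
    cartanForm a (gen a .star) (armRoot a i t) = 0 := by
  unfold armRoot
  split_ifs <;> simp [cartanForm_gen_gen, cartan, ht.ne']

lemma cartanForm_star_armSum {i : Fin 3} (h : 0 < a i - 1) :
    cartanForm a (gen a .star) (armSum a i) = -1 := by
  rw [armSum, map_sum, sum_eq_single_of_mem 0 (mem_range.2 h)
    fun t _ ht => cartanForm_star_armRoot_of_pos (Nat.pos_of_ne_zero ht)]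
  exact cartanForm_star_armRoot_zero h

lemma armCoxeter_apply_eq_self {i : Fin 3} {y : Lt a}
    (hy : ∀ t, cartanForm a (armRoot a i t) y = 0) : armCoxeter a i y = y :=
  chainCoxeter_apply_eq_self fun t _ => hy t

lemma armCoxeter_apply_star (i : Fin 3) :
    armCoxeter a i (gen a .star) = gen a .star + armRoot a i 0 := by
  by_cases h : 0 < a i - 1
  · rw [armCoxeter, chainCoxeter_apply_of_pos h fun t ht _ => by
      rw [cartanForm_comm, cartanForm_star_armRoot_of_pos ht], cartanForm_comm,
      cartanForm_star_armRoot_zero h]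
    module
  · have hzero (t : ℕ) : armRoot a i t = 0 := by rw [armRoot, dif_neg (by omega)]
    rw [armCoxeter_apply_eq_self fun t => by rw [hzero, map_zero, LinearMap.zero_apply], hzero,
      add_zero]

lemma armCoxeters_apply (i : Fin 3) {y : Lt a}
    (hy : ∀ j ≠ i, ∀ t, cartanForm a (armRoot a j t) y = 0)
    (hy' : ∀ j ≠ i, ∀ t, cartanForm a (armRoot a j t) (armCoxeter a i y) = 0) :
    armCoxeter a 0 (armCoxeter a 1 (armCoxeter a 2 y)) = armCoxeter a i y := by
  obtain rfl | rfl | rfl : i = 0 ∨ i = 1 ∨ i = 2 := by fin_cases i <;> simp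
  · rw [armCoxeter_apply_eq_self (hy 2 (by decide)), armCoxeter_apply_eq_self (hy 1 (by decide))]
  · rw [armCoxeter_apply_eq_self (i := 2) (hy 2 (by decide)),
      armCoxeter_apply_eq_self (hy' 0 (by decide))]
  · rw [armCoxeter_apply_eq_self (i := 1) (hy' 1 (by decide)),
      armCoxeter_apply_eq_self (hy' 0 (by decide))]

lemma simpleReflection_star_one_apply (y : Lt a) :
    simpleReflection a .star (simpleReflection a .one y) =
      y + cartanForm a (gen a .star) y • delta a := by
  simp only [simpleReflection, preReflection_apply, cartanForm_one, map_sub, map_smul,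
    cartanForm_gen_gen, cartan, delta]
  module

lemma coxeterLin_apply (y : Lt a) :
    coxeterLin a y = armCoxeter a 0 (armCoxeter a 1 (armCoxeter a 2 y)) +
      cartanForm a (gen a .star) (armCoxeter a 0 (armCoxeter a 1 (armCoxeter a 2 y))) •
        delta a := by
  simp only [coxeterLin, End.mul_apply, simpleReflection_star_one_apply]

end Arms

section Orbit

variable {a : Fin 3 → ℕ}

lemma coxeterLin_delta : coxeterLin a (delta a) = delta a := by
  rw [coxeterLin_apply, armCoxeter_apply_eq_self fun _ => cartanForm_delta _,
    armCoxeter_apply_eq_self fun _ => cartanForm_delta _,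
    armCoxeter_apply_eq_self fun _ => cartanForm_delta _, cartanForm_delta, zero_smul, add_zero]

lemma coxeterLin_pow_delta (n : ℕ) : (coxeterLin a ^ n) (delta a) = delta a := by
  rw [End.coe_pow, Function.iterate_fixed coxeterLin_delta]

lemma coxeterLin_armRoot {i : Fin 3} {t : ℕ} (ht : t + 1 < a i - 1) :
    coxeterLin a (armRoot a i t) = armRoot a i (t + 1) := by
  have harm : armCoxeter a i (armRoot a i t) = armRoot a i (t + 1) :=
    (isTypeAChain_armRoot i).chainCoxeter_apply_of_succ_lt ht
  rw [coxeterLin_apply, armCoxeters_apply i (fun j hj s => cartanForm_armRoot_of_ne hj s t)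
      (fun j hj s => by rw [harm]; exact cartanForm_armRoot_of_ne hj s _),
    harm, cartanForm_star_armRoot_of_pos t.succ_pos, zero_smul, add_zero]

lemma coxeterLin_armRoot_last {i : Fin 3} (h : 0 < a i - 1) :
    coxeterLin a (armRoot a i (a i - 1 - 1)) = delta a - armSum a i := by
  have harm : armCoxeter a i (armRoot a i (a i - 1 - 1)) = -armSum a i :=
    (isTypeAChain_armRoot i).chainCoxeter_apply_last h
  rw [coxeterLin_apply, armCoxeters_apply i (fun j hj s => cartanForm_armRoot_of_ne hj s _)
      (fun j hj s => by
        simp only [harm, armSum, map_neg, map_sum, cartanForm_armRoot_of_ne hj, sum_const_zero,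
          neg_zero]),
    harm, map_neg, cartanForm_star_armSum h]
  module

lemma coxeterLin_armSum {i : Fin 3} (h : 0 < a i - 1) :
    coxeterLin a (armSum a i) = delta a - armRoot a i 0 := by
  obtain ⟨m, hm⟩ : ∃ m, a i - 1 = m + 1 := ⟨a i - 1 - 1, by omega⟩
  have hlast : coxeterLin a (armRoot a i m) = delta a - armSum a i := by
    rw [show m = a i - 1 - 1 by omega]; exact coxeterLin_armRoot_last h
  rw [armSum, map_sum, hm, sum_range_succ,
    sum_congr rfl fun t ht => coxeterLin_armRoot (by have := mem_range.1 ht; omega), hlast,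
    armSum, hm, sum_range_succ' _ m]
  module

variable (a) in
def armOrbit (i : Fin 3) (u : ℕ) : Lt a :=
  if u % a i < a i - 1 then armRoot a i (u % a i) else delta a - armSum a i

lemma armOrbit_add_of_dvd {i : Fin 3} {n : ℕ} (h : a i ∣ n) (u : ℕ) :
    armOrbit a i (u + n) = armOrbit a i u := by
  obtain ⟨q, rfl⟩ := h
  simp only [armOrbit, Nat.add_mul_mod_self_left]

lemma armOrbit_of_lt {i : Fin 3} {u : ℕ} (hu : u < a i - 1) : armOrbit a i u = armRoot a i u := by
  rw [armOrbit, Nat.mod_eq_of_lt (by omega), if_pos hu]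

lemma armOrbit_zero (i : Fin 3) :
    armOrbit a i 0 =
      armRoot a i 0 + (1 + cartanForm a (gen a .star) (armRoot a i 0)) • delta a := by
  by_cases h : 0 < a i - 1
  · rw [armOrbit_of_lt h, cartanForm_star_armRoot_zero h]
    module
  · have hzero : armRoot a i 0 = 0 := by rw [armRoot, dif_neg h]
    rw [armOrbit, Nat.zero_mod, if_neg h, armSum, Nat.eq_zero_of_not_pos h, hzero]
    simp

lemma coxeterLin_armOrbit {i : Fin 3} (hai : 0 < a i) (u : ℕ) :
    coxeterLin a (armOrbit a i u) = armOrbit a i (u + 1) := by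
  have hr : u % a i < a i := Nat.mod_lt _ hai
  have hsucc : (u + 1) % a i = (u % a i + 1) % a i := (Nat.mod_add_mod u (a i) 1).symm
  simp only [armOrbit, hsucc]
  by_cases h : u % a i + 1 < a i
  · rw [Nat.mod_eq_of_lt h, if_pos (by omega)]
    by_cases h' : u % a i + 1 < a i - 1
    · rw [if_pos h', coxeterLin_armRoot h']
    · rw [if_neg h', show u % a i = a i - 1 - 1 by omega, coxeterLin_armRoot_last (by omega)]
  · rw [show u % a i + 1 = a i by omega, Nat.mod_self, if_neg (by omega), map_sub,
      coxeterLin_delta]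
    by_cases h' : 0 < a i - 1
    · rw [if_pos h', coxeterLin_armSum h', sub_sub_cancel]
    · rw [if_neg h', armSum, Nat.eq_zero_of_not_pos h']
      simp

lemma coxeterLin_pow_armOrbit {i : Fin 3} (hai : 0 < a i) (u n : ℕ) :
    (coxeterLin a ^ n) (armOrbit a i u) = armOrbit a i (u + n) := by
  induction n with
  | zero => rfl
  | succ n ih => rw [pow_succ', End.mul_apply, ih, coxeterLin_armOrbit hai, add_assoc]

lemma sum_range_armOrbit {i : Fin 3} (hai : 0 < a i) :
    ∑ u ∈ range (a i), armOrbit a i u = delta a := by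
  obtain ⟨m, hm⟩ : ∃ m, a i = m + 1 := ⟨a i - 1, by omega⟩
  rw [hm, sum_range_succ,
    sum_congr rfl fun u hu => armOrbit_of_lt (by have := mem_range.1 hu; omega), armOrbit,
    Nat.mod_eq_of_lt (by omega), if_neg (by omega), armSum, hm, Nat.add_sub_cancel]
  abel

lemma sum_range_armOrbit_of_dvd {i : Fin 3} (hai : 0 < a i) {n : ℕ} (h : a i ∣ n) :
    ∑ u ∈ range n, armOrbit a i u = ((n / a i : ℕ) : ℤ) • delta a := by
  obtain ⟨q, rfl⟩ := h
  rw [Nat.mul_div_cancel_left q hai]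
  induction q with
  | zero => simp
  | succ q ih =>
    rw [Nat.mul_succ, sum_range_add, ih,
      sum_congr rfl fun u _ => by rw [add_comm, armOrbit_add_of_dvd (dvd_mul_right _ _)],
      sum_range_armOrbit hai]
    push_cast
    module

lemma coxeterLin_star :
    coxeterLin a (gen a .star) = gen a .star - delta a + ∑ i, armOrbit a i 0 := by
  have hfix {i j : Fin 3} (h : i ≠ j) : armCoxeter a i (armRoot a j 0) = armRoot a j 0 :=
    armCoxeter_apply_eq_self fun t => cartanForm_armRoot_of_ne h t 0
  rw [coxeterLin_apply, armCoxeter_apply_star 2, map_add, armCoxeter_apply_star 1,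
    hfix (by decide), map_add, map_add, armCoxeter_apply_star 0, hfix (by decide),
    hfix (by decide)]
  simp only [Fin.sum_univ_three, armOrbit_zero, map_add, cartanForm_gen_gen, cartan]
  module

lemma coxeterLin_pow_star (hai : ∀ i, 0 < a i) (n : ℕ) :
    (coxeterLin a ^ n) (gen a .star) =
      gen a .star - (n : ℤ) • delta a + ∑ i, ∑ u ∈ range n, armOrbit a i u := by
  induction n with
  | zero => simp
  | succ n ih =>
    rw [pow_succ, End.mul_apply, coxeterLin_star, map_add, map_sub, ih, coxeterLin_pow_delta,
      map_sum]
    simp only [coxeterLin_pow_armOrbit (hai _), zero_add, sum_range_succ, Fin.sum_univ_three]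
    push_cast
    module

end Orbit

section Power

variable {a : Fin 3 → ℕ}

variable (a) in
def twistExponent (ℓ : ℕ) : ℤ := ((ℓ / a 0 + ℓ / a 1 + ℓ / a 2 : ℕ) : ℤ) - ℓ

lemma twistExponent_eq (hai : ∀ i, 0 < a i) {ℓ : ℕ} (hdvd : ∀ i, a i ∣ ℓ) :
    (twistExponent a ℓ : ℚ) = ((a 0 : ℚ)⁻¹ + (a 1 : ℚ)⁻¹ + (a 2 : ℚ)⁻¹ - 1) * ℓ := by
  simp only [twistExponent, Int.cast_sub, Int.cast_add, Int.cast_natCast, Nat.cast_add,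
    Nat.cast_div (hdvd _) (Nat.cast_ne_zero.2 (hai _).ne')]
  ring

variable (a) in
lemma dvd_lcm_three (i : Fin 3) : a i ∣ Nat.lcm (Nat.lcm (a 0) (a 1)) (a 2) := by
  fin_cases i
  · exact (Nat.dvd_lcm_left _ _).trans (Nat.dvd_lcm_left _ _)
  · exact (Nat.dvd_lcm_right _ _).trans (Nat.dvd_lcm_left _ _)
  · exact Nat.dvd_lcm_right _ _

lemma lcm_three_pos (hai : ∀ i, 0 < a i) : 0 < Nat.lcm (Nat.lcm (a 0) (a 1)) (a 2) :=
  Nat.lcm_pos (Nat.lcm_pos (hai 0) (hai 1)) (hai 2)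

lemma coxeterLin_pow_star_of_dvd (hai : ∀ i, 0 < a i) {ℓ : ℕ} (hdvd : ∀ i, a i ∣ ℓ) :
    (coxeterLin a ^ ℓ) (gen a .star) = gen a .star + twistExponent a ℓ • delta a := by
  rw [coxeterLin_pow_star hai, Fin.sum_univ_three, sum_range_armOrbit_of_dvd (hai 0) (hdvd 0),
    sum_range_armOrbit_of_dvd (hai 1) (hdvd 1), sum_range_armOrbit_of_dvd (hai 2) (hdvd 2),
    twistExponent]
  push_cast
  module

lemma coxeterLin_pow_gen (hai : ∀ i, 0 < a i) {ℓ : ℕ} (hdvd : ∀ i, a i ∣ ℓ) (v : Vt a) :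
    (coxeterLin a ^ ℓ) (gen a v) =
      gen a v + (twistExponent a ℓ * (gen a v .star + gen a v .one)) • delta a := by
  cases v with
  | star =>
    rw [coxeterLin_pow_star_of_dvd hai hdvd]
    simp [gen]
  | one =>
    have h : (coxeterLin a ^ ℓ) (gen a .one) = gen a .one + twistExponent a ℓ • delta a := by
      rw [gen_one_eq, map_sub, coxeterLin_pow_delta, coxeterLin_pow_star_of_dvd hai hdvd]
      abel
    rw [h]
    simp [gen]
  | br i j =>
    have horbit : gen a (.br i j) = armOrbit a i j := by
      rw [armOrbit_of_lt j.isLt, armRoot, dif_pos j.isLt]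
    rw [horbit, coxeterLin_pow_armOrbit (hai i), armOrbit_add_of_dvd (hdvd i)]
    simp [← horbit, gen]

lemma coxeterLin_pow_apply (hai : ∀ i, 0 < a i) {ℓ : ℕ} (hdvd : ∀ i, a i ∣ ℓ) (x : Lt a) :
    (coxeterLin a ^ ℓ) x = x + (twistExponent a ℓ * (x .star + x .one)) • delta a := by
  induction x using Finsupp.induction_linear with
  | zero => simp
  | add x y hx hy =>
    rw [map_add, hx, hy, Finsupp.add_apply, Finsupp.add_apply]
    module
  | single v z =>
    rw [← Finsupp.smul_single_one, map_smul, ← gen, coxeterLin_pow_gen hai hdvd,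
      Finsupp.smul_apply, Finsupp.smul_apply, smul_eq_mul, smul_eq_mul]
    module

end Power

lemma eq_zero_of_mul_eq_of_sum_eq {ι K : Type*} [Fintype ι] [Field K] {c x : ι → K} {y : K}
    (hc : ∀ i, c i ≠ 0) (h : ∑ i, (c i)⁻¹ ≠ 1) (hx : ∀ i, c i * x i = y)
    (hs : ∑ i, x i = y) : y = 0 := by
  have hxy (i : ι) : x i = (c i)⁻¹ * y := by rw [← hx i, inv_mul_cancel_left₀ (hc i)]
  simp only [hxy, ← sum_mul] at hs
  by_contra hy
  exact h (mul_right_cancel₀ hy (hs.trans (one_mul y).symm))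

namespace IsEulerForm

variable {a : Fin 3 → ℕ} {χ : Lt a →ₗ[ℤ] Lt a →ₗ[ℤ] ℤ} (hχ : IsEulerForm a χ)
include hχ

lemma sub_apply_coxeterLin (x y : Lt a) :
    χ x y - χ x (coxeterLin a y) = cartanForm a x y := by
  have h := hχ.2 y x
  rw [← coe_coxeterLin] at h
  rw [cartanForm_apply, hχ.1 x y, h]
  ring

lemma apply_delta (x : Lt a) : χ x (delta a) = -χ (delta a) x := by
  have h := hχ.1 x (delta a)
  rw [← cartanForm_apply, cartanForm_delta] at h
  linarith

lemma delta_delta : χ (delta a) (delta a) = 0 := by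
  have h := hχ.apply_delta (delta a)
  linarith

lemma apply_coxeter_coxeter (x y : Lt a) : χ (coxeter a x) (coxeter a y) = χ x y := by
  rw [hχ.2 x y, hχ.2 y, neg_neg]

lemma apply_pow_coxeterLin (n : ℕ) (x y : Lt a) :
    χ ((coxeterLin a ^ n) x) ((coxeterLin a ^ n) y) = χ x y := by
  induction n with
  | zero => rfl
  | succ n ih =>
    rw [pow_succ', End.mul_apply, End.mul_apply, coe_coxeterLin, ← ih]
    exact hχ.apply_coxeter_coxeter _ _

lemma mul_delta_apply_comm (hai : ∀ i, 0 < a i) {ℓ : ℕ} (hdvd : ∀ i, a i ∣ ℓ)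
    (hk : twistExponent a ℓ ≠ 0) (x y : Lt a) :
    (x .star + x .one) * χ (delta a) y = (y .star + y .one) * χ (delta a) x := by
  have h := hχ.apply_pow_coxeterLin ℓ x y
  simp only [coxeterLin_pow_apply hai hdvd, map_add, map_smul, LinearMap.add_apply,
    LinearMap.smul_apply, smul_eq_mul, hχ.delta_delta, hχ.apply_delta x] at h
  exact mul_left_cancel₀ hk (by linear_combination h)

lemma apply_star_armOrbit {i : Fin 3} (hai : 0 < a i) {u : ℕ} (hu : u < a i) :
    χ (gen a .star) (armOrbit a i u) =
      χ (gen a .star) (armOrbit a i 0) + if u = 0 then 0 else 1 := by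
  induction u with
  | zero => simp
  | succ u ih =>
    have h := hχ.sub_apply_coxeterLin (gen a .star) (armOrbit a i u)
    rw [coxeterLin_armOrbit hai, ih (by omega), armOrbit_of_lt (u := u) (by omega)] at h
    rw [if_neg u.succ_ne_zero]
    rcases Nat.eq_zero_or_pos u with rfl | hu0
    · rw [cartanForm_star_armRoot_zero (by omega), if_pos rfl] at h
      linarith
    · rw [cartanForm_star_armRoot_of_pos hu0, if_neg hu0.ne'] at h
      linarith

lemma natCast_mul_apply_star_armOrbit_zero {i : Fin 3} (hai : 0 < a i) :
    (a i : ℤ) * (χ (gen a .star) (armOrbit a i 0) + 1) = 1 - χ (delta a) (gen a .star) := by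
  have h := congrArg (χ (gen a .star)) (sum_range_armOrbit hai)
  rw [map_sum, sum_congr rfl fun u hu => hχ.apply_star_armOrbit hai (mem_range.1 hu),
    hχ.apply_delta] at h
  obtain ⟨m, hm⟩ : ∃ m, a i = m + 1 := ⟨a i - 1, by omega⟩
  simp only [hm, sum_range_succ', Nat.succ_ne_zero, if_false, if_pos, sum_const, card_range,
    nsmul_eq_mul] at h ⊢
  push_cast
  linarith

lemma delta_apply_star (hai : ∀ i, 0 < a i)
    (hA : (a 0 : ℚ)⁻¹ + (a 1 : ℚ)⁻¹ + (a 2 : ℚ)⁻¹ ≠ 1) :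
    χ (delta a) (gen a .star) = 1 := by
  have hstar := hχ.sub_apply_coxeterLin (gen a .star) (gen a .star)
  rw [cartanForm_gen_gen, coxeterLin_star, map_add, map_sub, hχ.apply_delta,
    Fin.sum_univ_three, map_add, map_add] at hstar
  have hsum : ∑ i, (χ (gen a .star) (armOrbit a i 0) + 1) = 1 - χ (delta a) (gen a .star) := by
    simp only [Fin.sum_univ_three, cartan] at hstar ⊢
    linarith
  have hzero := eq_zero_of_mul_eq_of_sum_eq (c := fun i => (a i : ℚ))
    (x := fun i => ((χ (gen a .star) (armOrbit a i 0) + 1 : ℤ) : ℚ))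
    (y := ((1 - χ (delta a) (gen a .star) : ℤ) : ℚ)) (fun i => Nat.cast_ne_zero.2 (hai i).ne')
    (by simpa [Fin.sum_univ_three] using hA)
    (fun i => by exact_mod_cast hχ.natCast_mul_apply_star_armOrbit_zero (hai i))
    (by exact_mod_cast hsum)
  have : 1 - χ (delta a) (gen a .star) = 0 := by exact_mod_cast hzero
  linarith

lemma delta_apply (hai : ∀ i, 0 < a i)
    (hA : (a 0 : ℚ)⁻¹ + (a 1 : ℚ)⁻¹ + (a 2 : ℚ)⁻¹ ≠ 1) (y : Lt a) :
    χ (delta a) y = y .star + y .one := by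
  set ℓ := Nat.lcm (Nat.lcm (a 0) (a 1)) (a 2)
  have hdvd : ∀ i, a i ∣ ℓ := dvd_lcm_three a
  have hℓ : 0 < ℓ := lcm_three_pos hai
  have hk : twistExponent a ℓ ≠ 0 := by
    have : (twistExponent a ℓ : ℚ) ≠ 0 := by
      rw [twistExponent_eq hai hdvd]
      exact mul_ne_zero (sub_ne_zero.2 hA) (by exact_mod_cast hℓ.ne')
    exact_mod_cast this
  have h := hχ.mul_delta_apply_comm hai hdvd hk (gen a .star) y
  rw [hχ.delta_apply_star hai hA] at h
  simpa [gen] using h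

end IsEulerForm

/-- **`c̃_A^{ℓ_A} = t_δ^{−k}`** (Proposition 4.10 (3) of the paper): with
`ℓ = lcm(a₁,a₂,a₃)` and `k = ℓ/a₁ + ℓ/a₂ + ℓ/a₃ − ℓ` one has `k > 0`,
`k = χ_A · ℓ` (where `χ_A = 1/a₁ + 1/a₂ + 1/a₃ − 1`), and
`c̃_A^ℓ(x) = x + k χ(δ,x) δ = t_δ^{−k}(x)` for all `x ∈ L̃`. -/
theorem coxeter_lcm_eq_twist_pow (a : Fin 3 → ℕ) (ha : ∀ i, 0 < a i)
    (hA : 1 < (a 0 : ℚ)⁻¹ + (a 1 : ℚ)⁻¹ + (a 2 : ℚ)⁻¹)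
    (χ : Lt a →ₗ[ℤ] Lt a →ₗ[ℤ] ℤ) (hχ : IsEulerForm a χ)
    (ℓ : ℕ) (hℓ : ℓ = Nat.lcm (Nat.lcm (a 0) (a 1)) (a 2))
    (k : ℤ) (hk : k = ((ℓ / a 0 + ℓ / a 1 + ℓ / a 2 : ℕ) : ℤ) - (ℓ : ℤ)) :
    0 < k ∧
    (k : ℚ) = ((a 0 : ℚ)⁻¹ + (a 1 : ℚ)⁻¹ + (a 2 : ℚ)⁻¹ - 1) * (ℓ : ℚ) ∧
    (∀ x : Lt a, (coxeter a)^[ℓ] x = x + (k * χ (delta a) x) • delta a) := by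
  have hdvd : ∀ i, a i ∣ ℓ := hℓ ▸ dvd_lcm_three a
  have hℓpos : 0 < ℓ := hℓ ▸ lcm_three_pos ha
  have hkQ : (k : ℚ) = ((a 0 : ℚ)⁻¹ + (a 1 : ℚ)⁻¹ + (a 2 : ℚ)⁻¹ - 1) * ℓ :=
    hk ▸ twistExponent_eq ha hdvd
  refine ⟨?_, hkQ, fun x => ?_⟩
  · have : (0 : ℚ) < k := hkQ ▸ mul_pos (by linarith) (Nat.cast_pos.2 hℓpos)
    exact_mod_cast this
  · rw [← coe_coxeterLin, ← End.coe_pow, coxeterLin_pow_apply ha hdvd,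
      hχ.delta_apply ha hA.ne', hk, twistExponent]

end
end AffineGRS
end
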